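/- arXiv:2603.16431 — 5 statements merged into one kernel-verified Lean document; each statement's English description precedes it below -/
import Mathlib

section
/- Poissonization identity for the expected occupancy count: for every t > 0, Σ_{j≥1} (1 - e^{-t p_j}) = ∫_0^∞ e^{-x} ν(t/x) dx, where ν(u) = card{ j ≥ 1 : p_j ≥ 1/u }; in particular both sides are finite. -/
open MeasureTheory Real

/-- The counting function `ν(u) = card{ j ≥ 1 : p_j ≥ 1/u }` of the frequencies. -/
noncomputable def nuCount (p : ℕ → ℝ) (u : ℝ) : ℕ := Set.ncard {j : ℕ | 1 / u ≤ p j}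

/-!
Write `e^{-x} ν(t/x) = Σ_j e^{-x} 1[x ≤ t p_j]` for `x > 0` (a finite sum, since `p_j → 0`).
By Tonelli the integral over `(0, ∞)` is `Σ_j ∫_0^{t p_j} e^{-x} dx = Σ_j (1 - e^{-t p_j})`,
which is finite because `1 - e^{-a} ≤ a` and `Σ_j p_j < ∞`. Finiteness of the lower integral
then gives integrability, and the Bochner integral agrees with it.
-/

open Set
open scoped ENNReal

theorem one_sub_exp_neg_nonneg {a : ℝ} (ha : 0 ≤ a) : 0 ≤ 1 - exp (-a) :=
  sub_nonneg.2 (exp_le_one_iff.2 (neg_nonpos.2 ha))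

theorem summable_one_sub_exp_neg {ι : Type*} {a : ι → ℝ} (hsum : Summable a)
    (ha : ∀ j, 0 ≤ a j) : Summable fun j => 1 - exp (-a j) :=
  hsum.of_nonneg_of_le (fun j => one_sub_exp_neg_nonneg (ha j))
    fun j => by linarith [add_one_le_exp (-a j)]

theorem Summable.finite_setOf_le {ι : Type*} {p : ι → ℝ} (hp : Summable p) {c : ℝ}
    (hc : 0 < c) : {j | c ≤ p j}.Finite := by
  simpa only [not_lt] using
    Filter.eventually_cofinite.1 (hp.tendsto_cofinite_zero.eventually_lt_const hc)

theorem tsum_indicator_Iic_eq_ncard_mul {ι : Type*} {a : ι → ℝ} {x : ℝ}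
    (hfin : {j | x ≤ a j}.Finite) (w : ℝ → ℝ≥0∞) :
    ∑' j, (Iic (a j)).indicator w x = {j | x ≤ a j}.ncard * w x := by
  have hind : ∀ j, (Iic (a j)).indicator w x = {j | x ≤ a j}.indicator (fun _ => w x) j := by
    intro j
    by_cases hj : x ≤ a j <;> simp [hj]
  simp_rw [hind]
  rw [← tsum_subtype, ENNReal.tsum_set_const, ← hfin.cast_ncard_eq]
  rfl

theorem lintegral_Ioc_ofReal_exp_neg {a : ℝ} (ha : 0 ≤ a) :
    ∫⁻ x in Ioc 0 a, ENNReal.ofReal (exp (-x)) = ENNReal.ofReal (1 - exp (-a)) := by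
  rw [← ofReal_integral_eq_lintegral_ofReal continuous_neg.rexp.integrableOn_Ioc
    (Filter.Eventually.of_forall fun x => exp_nonneg _), ← intervalIntegral.integral_of_le ha]
  simp [intervalIntegral.integral_comp_neg (fun y => exp y), integral_exp]

theorem lintegral_Ioi_indicator_Iic_ofReal_exp_neg {a : ℝ} (ha : 0 ≤ a) :
    ∫⁻ x in Ioi 0, (Iic a).indicator (fun y => ENNReal.ofReal (exp (-y))) x =
      ENNReal.ofReal (1 - exp (-a)) := by
  rw [lintegral_indicator measurableSet_Iic, Measure.restrict_restrict measurableSet_Iic,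
    Iic_inter_Ioi, lintegral_Ioc_ofReal_exp_neg ha]

theorem integrable_and_integral_eq_of_ae_eq_toReal {α : Type*} [MeasurableSpace α]
    {μ : Measure α} {f : α → ℝ} {F : α → ℝ≥0∞} (hF : AEMeasurable F μ) {r : ℝ} (hr : 0 ≤ r)
    (hF_lint : ∫⁻ x, F x ∂μ = ENNReal.ofReal r) (hfF : f =ᵐ[μ] fun x => (F x).toReal) :
    Integrable f μ ∧ ∫ x, f x ∂μ = r := by
  have hF_ne_top : ∫⁻ x, F x ∂μ ≠ ∞ := hF_lint ▸ ENNReal.ofReal_ne_top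
  refine ⟨(integrable_toReal_of_lintegral_ne_top hF hF_ne_top).congr hfF.symm, ?_⟩
  rw [integral_congr_ae hfF, integral_toReal hF (ae_lt_top' hF hF_ne_top), hF_lint,
    ENNReal.toReal_ofReal hr]

theorem nuCount_div {p : ℕ → ℝ} {t : ℝ} (ht : 0 < t) (x : ℝ) :
    nuCount p (t / x) = {j | x ≤ t * p j}.ncard := by
  simp only [nuCount, one_div_div, div_le_iff₀' ht]

theorem ofReal_exp_neg_mul_nuCount_div {p : ℕ → ℝ} (hsum : Summable p) {t x : ℝ} (ht : 0 < t)
    (hx : 0 < x) :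
    ENNReal.ofReal (exp (-x) * nuCount p (t / x)) =
      ∑' j, (Iic (t * p j)).indicator (fun y => ENNReal.ofReal (exp (-y))) x := by
  rw [tsum_indicator_Iic_eq_ncard_mul ((hsum.mul_left t).finite_setOf_le hx), ← nuCount_div ht,
    ENNReal.ofReal_mul (exp_nonneg _), ENNReal.ofReal_natCast, mul_comm]

/-- **Poissonization identity for the expected occupancy count:** if `(p_j)_{j≥1}` are
strictly positive with `Σ_j p_j < ∞`, then for every `t > 0`,
`Σ_{j≥1} (1 - e^{-t p_j}) = ∫_0^∞ e^{-x} ν(t/x) dx`, where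
`ν(u) = card{ j ≥ 1 : p_j ≥ 1/u }`; in particular both sides are finite. -/
theorem poissonization_identity (p : ℕ → ℝ) (hp : ∀ j, 0 < p j) (hsum : Summable p)
    (t : ℝ) (ht : 0 < t) :
    Summable (fun j : ℕ => 1 - Real.exp (-(t * p j))) ∧
    IntegrableOn (fun x : ℝ => Real.exp (-x) * (nuCount p (t / x) : ℝ)) (Set.Ioi 0) volume ∧
    ∑' j : ℕ, (1 - Real.exp (-(t * p j))) =
      ∫ x in Set.Ioi (0 : ℝ), Real.exp (-x) * (nuCount p (t / x) : ℝ) := by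
  have htp : ∀ j, 0 ≤ t * p j := fun j => (mul_pos ht (hp j)).le
  have hS := summable_one_sub_exp_neg (hsum.mul_left t) htp
  have hg_meas : ∀ j,
      Measurable ((Iic (t * p j)).indicator fun y => ENNReal.ofReal (exp (-y))) :=
    fun j => (ENNReal.measurable_ofReal.comp (by fun_prop)).indicator measurableSet_Iic
  set F : ℝ → ℝ≥0∞ := fun x =>
    ∑' j, (Iic (t * p j)).indicator (fun y => ENNReal.ofReal (exp (-y))) x
  have hF_lint : ∫⁻ x in Ioi 0, F x = ENNReal.ofReal (∑' j, (1 - exp (-(t * p j)))) := by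
    rw [lintegral_tsum fun j => (hg_meas j).aemeasurable, ENNReal.ofReal_tsum_of_nonneg
      (fun j => one_sub_exp_neg_nonneg (htp j)) hS]
    exact tsum_congr fun j => lintegral_Ioi_indicator_Iic_ofReal_exp_neg (htp j)
  have hF_ae : (fun x => exp (-x) * (nuCount p (t / x) : ℝ)) =ᵐ[volume.restrict (Ioi 0)]
      fun x => (F x).toReal := by
    refine (ae_restrict_iff' measurableSet_Ioi).2 (ae_of_all _ fun x hx => ?_)
    dsimp only [F]
    rw [← ofReal_exp_neg_mul_nuCount_div hsum ht hx, ENNReal.toReal_ofReal (by positivity)]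
  obtain ⟨hInt, hIntegral⟩ := integrable_and_integral_eq_of_ae_eq_toReal
    (Measurable.tsum hg_meas).aemeasurable
    (tsum_nonneg fun j => one_sub_exp_neg_nonneg (htp j)) hF_lint hF_ae
  exact ⟨hS, hInt, hIntegral.symm⟩
end

section
/- Itô-isometry computation for the stochastic-integral representation of Z_α^{(2)}: for every α ∈ (0,1) and all s, t > 0, ∫_0^∞ (1 - e^{-s x^{-1/α}})(1 - e^{-t x^{-1/α}}) dx = Γ(1-α) ( s^α + t^α - (s+t)^α ), where Γ denotes Euler's Gamma function; consequently the function (s,t) ↦ s^α + t^α - (s+t)^α is a (positive semidefinite) covariance function, being 1/Γ(1-α) times a Gram matrix of the L²(0,∞) functions x ↦ 1 - e^{-t x^{-1/α}}. -/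
open MeasureTheory Real Set Filter Topology

/-! Since `e^{-s v} e^{-t v} = e^{-(s+t) v}`, the integrand is `g_s + g_t - g_{s+t}` with
`g_a(x) = 1 - e^{-a x^{-1/α}}`, so everything reduces to `∫ g_a = Γ(1-α) a^α`. The substitution
`x = y^{-α}` turns this into `α ∫ y^{-α-1} (1 - e^{-a y}) dy`, and integrating by parts against
`y^{-α}` leaves `a ∫ y^{-α} e^{-a y} dy`, a Gamma integral. The kernel
`s^α + t^α - (s+t)^α` is then `Γ(1-α)⁻¹` times the Gram matrix `∫ g_s g_t`. -/

lemma one_sub_exp_neg_nonneg_s13 {v : ℝ} (hv : 0 ≤ v) : 0 ≤ 1 - exp (-v) :=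
  sub_nonneg.2 (exp_le_one_iff.2 (neg_nonpos.2 hv))

lemma one_sub_exp_neg_le (v : ℝ) : 1 - exp (-v) ≤ v := by
  linarith [one_sub_le_exp_neg v]

section Substitution

variable {E : Type*} [NormedAddCommGroup E] [NormedSpace ℝ E] {α : ℝ}

lemma rpow_neg_rpow_neg_inv (hα : α ≠ 0) {y : ℝ} (hy : 0 ≤ y) :
    (y ^ (-α)) ^ (-(1 / α)) = y := by
  rw [← rpow_mul hy, neg_mul_neg, mul_one_div_cancel hα, rpow_one]

theorem integral_comp_rpow_neg_inv_Ioi (g : ℝ → E) (hα : 0 < α) :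
    ∫ x in Ioi 0, g (x ^ (-(1 / α))) = α • ∫ y in Ioi 0, y ^ (-α - 1) • g y := by
  rw [← integral_comp_rpow_Ioi _ (neg_ne_zero.2 hα.ne'), ← integral_smul]
  refine setIntegral_congr_fun measurableSet_Ioi fun y hy => ?_
  rw [abs_neg, abs_of_pos hα, rpow_neg_rpow_neg_inv hα.ne' (le_of_lt hy), smul_smul]

theorem integrableOn_comp_rpow_neg_inv_Ioi_iff (g : ℝ → E) (hα : 0 < α) :
    IntegrableOn (fun x => g (x ^ (-(1 / α)))) (Ioi 0) ↔
      IntegrableOn (fun y => y ^ (-α - 1) • g y) (Ioi 0) := by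
  rw [← integrableOn_Ioi_comp_rpow_iff' _ (neg_ne_zero.2 hα.ne')]
  refine integrableOn_congr_fun (fun y hy => ?_) measurableSet_Ioi
  simp only [rpow_neg_rpow_neg_inv hα.ne' (le_of_lt hy)]

end Substitution

lemma one_sub_exp_neg_mul_mul_one_sub_exp_neg_mul (s t v : ℝ) :
    (1 - exp (-(s * v))) * (1 - exp (-(t * v))) =
      (1 - exp (-(s * v))) + (1 - exp (-(t * v))) - (1 - exp (-((s + t) * v))) := by
  rw [add_mul, neg_add, exp_add]; ring

section

variable {α a s t : ℝ}

lemma integrableOn_rpow_mul_one_sub_exp_neg_mul (hα0 : 0 < α) (hα1 : α < 1) (ha : 0 ≤ a) :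
    IntegrableOn (fun y => y ^ (-α - 1) * (1 - exp (-(a * y)))) (Ioi 0) := by
  have hmeas : AEStronglyMeasurable (fun y : ℝ => y ^ (-α - 1) * (1 - exp (-(a * y)))) :=
    (by fun_prop : Measurable _).aestronglyMeasurable
  have hnonneg : ∀ y : ℝ, 0 < y → 0 ≤ y ^ (-α - 1) * (1 - exp (-(a * y))) := fun y hy =>
    mul_nonneg (rpow_nonneg hy.le _) (one_sub_exp_neg_nonneg_s13 (by positivity))
  rw [← Ioc_union_Ioi_eq_Ioi zero_le_one, integrableOn_union]
  constructor
  · have hdom : IntegrableOn (fun y : ℝ => a * y ^ (-α)) (Ioc 0 1) :=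
      (intervalIntegral.intervalIntegrable_rpow' (by linarith)).1.const_mul a
    refine hdom.mono' hmeas.restrict ((ae_restrict_iff' measurableSet_Ioc).2 <|
      ae_of_all _ fun y hy => ?_)
    rw [norm_of_nonneg (hnonneg y hy.1)]
    calc y ^ (-α - 1) * (1 - exp (-(a * y))) ≤ y ^ (-α - 1) * (a * y) :=
          mul_le_mul_of_nonneg_left (one_sub_exp_neg_le _) (rpow_nonneg hy.1.le _)
      _ = a * y ^ (-α) := by rw [rpow_sub_one hy.1.ne']; field_simp [hy.1.ne']
  · have hdom : IntegrableOn (fun y : ℝ => y ^ (-α - 1)) (Ioi 1) :=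
      integrableOn_Ioi_rpow_of_lt (by linarith) one_pos
    refine hdom.mono' hmeas.restrict ((ae_restrict_iff' measurableSet_Ioi).2 <|
      ae_of_all _ fun y hy => ?_)
    have hy0 : (0 : ℝ) < y := one_pos.trans hy
    rw [norm_of_nonneg (hnonneg y hy0)]
    exact mul_le_of_le_one_right (rpow_nonneg hy0.le _) (sub_le_self _ (exp_pos _).le)

lemma integral_mul_exp_neg_mul_mul_rpow_neg_Ioi (hα1 : α < 1) (ha : 0 < a) :
    ∫ y in Ioi 0, a * exp (-(a * y)) * y ^ (-α) = Gamma (1 - α) * a ^ α := by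
  have h := integral_rpow_mul_exp_neg_mul_Ioi (sub_pos.2 hα1) ha
  rw [sub_sub_cancel_left] at h
  calc ∫ y in Ioi 0, a * exp (-(a * y)) * y ^ (-α)
      = a * ∫ y in Ioi 0, y ^ (-α) * exp (-(a * y)) := by
        rw [← integral_const_mul]; congr 1; ext y; ring
    _ = Gamma (1 - α) * a ^ α := by
        rw [h, one_div, inv_rpow ha.le, ← rpow_neg ha.le, ← mul_assoc, mul_comm a,
          ← rpow_add_one ha.ne', show -(1 - α) + 1 = α by ring, mul_comm]

lemma integral_rpow_mul_one_sub_exp_neg_mul_Ioi (hα0 : 0 < α) (hα1 : α < 1) (ha : 0 < a) :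
    ∫ y in Ioi 0, y ^ (-α - 1) * (1 - exp (-(a * y))) = Gamma (1 - α) * a ^ α / α := by
  have hu : ∀ y ∈ Ioi (0 : ℝ),
      HasDerivAt (fun y => 1 - exp (-(a * y))) (a * exp (-(a * y))) y := fun y _ =>
    ((((hasDerivAt_id' y).const_mul a).fun_neg).exp.const_sub 1).congr_deriv (by ring)
  have hv : ∀ y ∈ Ioi (0 : ℝ), HasDerivAt (fun y => y ^ (-α)) (-α * y ^ (-α - 1)) y :=
    fun y hy => hasDerivAt_rpow_const (Or.inl (ne_of_gt hy))
  have huv' : IntegrableOn (fun y => (1 - exp (-(a * y))) * (-α * y ^ (-α - 1))) (Ioi 0) :=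
    IntegrableOn.congr_fun
      ((integrableOn_rpow_mul_one_sub_exp_neg_mul hα0 hα1 ha.le).const_mul (-α))
      (fun y _ => by ring) measurableSet_Ioi
  -- integrable because its integral is the nonzero value `Γ(1-α) a^α`
  have hu'v : IntegrableOn (fun y => a * exp (-(a * y)) * y ^ (-α)) (Ioi 0) :=
    Integrable.of_integral_ne_zero <| by
      rw [integral_mul_exp_neg_mul_mul_rpow_neg_Ioi hα1 ha]
      exact (mul_pos (Gamma_pos_of_pos (sub_pos.2 hα1)) (rpow_pos_of_pos ha _)).ne'
  have hzero : Tendsto (fun y => (1 - exp (-(a * y))) * y ^ (-α)) (𝓝[>] 0) (𝓝 0) := by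
    have hbound : Tendsto (fun y : ℝ => a * y ^ (1 - α)) (𝓝[>] 0) (𝓝 0) := by
      have := ((continuousAt_rpow_const 0 (1 - α) (Or.inr (by linarith))).tendsto.const_mul a)
      rw [zero_rpow (by linarith), mul_zero] at this
      exact tendsto_nhdsWithin_of_tendsto_nhds this
    refine tendsto_of_tendsto_of_tendsto_of_le_of_le' tendsto_const_nhds hbound ?_ ?_ <;>
      filter_upwards [self_mem_nhdsWithin] with y (hy : 0 < y)
    · exact mul_nonneg (one_sub_exp_neg_nonneg_s13 (by positivity)) (rpow_nonneg hy.le _)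
    · calc (1 - exp (-(a * y))) * y ^ (-α) ≤ a * y * y ^ (-α) :=
            mul_le_mul_of_nonneg_right (one_sub_exp_neg_le _) (rpow_nonneg hy.le _)
        _ = a * y ^ (1 - α) := by rw [rpow_sub hy, rpow_one, rpow_neg hy.le]; ring
  have hinfty : Tendsto (fun y => (1 - exp (-(a * y))) * y ^ (-α)) atTop (𝓝 0) := by
    simpa using ((tendsto_exp_neg_atTop_nhds_zero.comp
      (tendsto_id.const_mul_atTop ha)).const_sub 1).mul (tendsto_rpow_neg_atTop hα0)
  have hparts := integral_Ioi_mul_deriv_eq_deriv_mul hu hv huv' hu'v hzero hinfty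
  have hpull : ∫ y in Ioi 0, (1 - exp (-(a * y))) * (-α * y ^ (-α - 1)) =
      -α * ∫ y in Ioi 0, y ^ (-α - 1) * (1 - exp (-(a * y))) := by
    rw [← integral_const_mul]; congr 1; ext y; ring
  rw [integral_mul_exp_neg_mul_mul_rpow_neg_Ioi hα1 ha, hpull] at hparts
  field_simp
  linarith

lemma integrableOn_one_sub_exp_neg_mul_rpow_neg_inv (hα0 : 0 < α) (hα1 : α < 1) (ha : 0 ≤ a) :
    IntegrableOn (fun x => 1 - exp (-(a * x ^ (-(1 / α))))) (Ioi 0) :=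
  (integrableOn_comp_rpow_neg_inv_Ioi_iff (fun y => 1 - exp (-(a * y))) hα0).2
    (integrableOn_rpow_mul_one_sub_exp_neg_mul hα0 hα1 ha)

lemma integral_one_sub_exp_neg_mul_rpow_neg_inv_Ioi (hα0 : 0 < α) (hα1 : α < 1) (ha : 0 < a) :
    ∫ x in Ioi 0, (1 - exp (-(a * x ^ (-(1 / α))))) = Gamma (1 - α) * a ^ α := by
  rw [integral_comp_rpow_neg_inv_Ioi (fun y => 1 - exp (-(a * y))) hα0]
  simp only [smul_eq_mul]
  rw [integral_rpow_mul_one_sub_exp_neg_mul_Ioi hα0 hα1 ha]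
  field_simp

theorem integrableOn_one_sub_exp_mul_one_sub_exp (hα0 : 0 < α) (hα1 : α < 1)
    (hs : 0 ≤ s) (ht : 0 ≤ t) :
    IntegrableOn (fun x => (1 - exp (-(s * x ^ (-(1 / α))))) *
      (1 - exp (-(t * x ^ (-(1 / α)))))) (Ioi 0) := by
  simp_rw [one_sub_exp_neg_mul_mul_one_sub_exp_neg_mul]
  exact ((integrableOn_one_sub_exp_neg_mul_rpow_neg_inv hα0 hα1 hs).fun_add
    (integrableOn_one_sub_exp_neg_mul_rpow_neg_inv hα0 hα1 ht)).sub
    (integrableOn_one_sub_exp_neg_mul_rpow_neg_inv hα0 hα1 (add_nonneg hs ht))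

theorem integral_one_sub_exp_mul_one_sub_exp_Ioi (hα0 : 0 < α) (hα1 : α < 1)
    (hs : 0 < s) (ht : 0 < t) :
    ∫ x in Ioi 0, (1 - exp (-(s * x ^ (-(1 / α))))) * (1 - exp (-(t * x ^ (-(1 / α))))) =
      Gamma (1 - α) * (s ^ α + t ^ α - (s + t) ^ α) := by
  have hint {a : ℝ} (ha : 0 < a) := integrableOn_one_sub_exp_neg_mul_rpow_neg_inv hα0 hα1 ha.le
  simp_rw [one_sub_exp_neg_mul_mul_one_sub_exp_neg_mul]
  rw [integral_sub ((hint hs).fun_add (hint ht)) (hint (add_pos hs ht)),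
    integral_add (hint hs) (hint ht), integral_one_sub_exp_neg_mul_rpow_neg_inv_Ioi hα0 hα1 hs,
    integral_one_sub_exp_neg_mul_rpow_neg_inv_Ioi hα0 hα1 ht,
    integral_one_sub_exp_neg_mul_rpow_neg_inv_Ioi hα0 hα1 (add_pos hs ht)]
  ring

end

theorem sum_sum_mul_integral_mul_nonneg {X ι : Type*} [MeasurableSpace X] {μ : Measure X}
    [Fintype ι] {f : ι → X → ℝ} (hf : ∀ i j, Integrable (fun x => f i x * f j x) μ)
    (c : ι → ℝ) : 0 ≤ ∑ i, ∑ j, c i * c j * ∫ x, f i x * f j x ∂μ := by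
  calc 0 ≤ ∫ x, (∑ i, c i * f i x) ^ 2 ∂μ := integral_nonneg fun _ => sq_nonneg _
    _ = ∫ x, ∑ i, ∑ j, c i * c j * (f i x * f j x) ∂μ := by
        congr 1; ext x
        rw [sq, Finset.sum_mul_sum]
        exact Finset.sum_congr rfl fun i _ => Finset.sum_congr rfl fun j _ => by ring
    _ = ∑ i, ∑ j, c i * c j * ∫ x, f i x * f j x ∂μ := by
        rw [integral_finsetSum _ fun i _ => integrable_finsetSum _ fun j _ =>
          (hf i j).const_mul _]
        refine Finset.sum_congr rfl fun i _ => ?_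
        rw [integral_finsetSum _ fun j _ => (hf i j).const_mul _]
        simp_rw [integral_const_mul]

/-- **Itô-isometry computation for the stochastic-integral representation of `Z_α^{(2)}`.**
For every `α ∈ (0,1)` and all `s, t > 0`,
`∫_0^∞ (1 - e^{-s x^{-1/α}})(1 - e^{-t x^{-1/α}}) dx = Γ(1-α)(s^α + t^α - (s+t)^α)`;
consequently `(s,t) ↦ s^α + t^α - (s+t)^α` is a positive semidefinite covariance function. -/
theorem ito_isometry_covariance (α s t : ℝ) (hα0 : 0 < α) (hα1 : α < 1)
    (hs : 0 < s) (ht : 0 < t) :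
    (∫ x in Set.Ioi (0 : ℝ),
        (1 - Real.exp (-(s * x ^ (-(1 / α))))) * (1 - Real.exp (-(t * x ^ (-(1 / α))))) =
      Real.Gamma (1 - α) * (s ^ α + t ^ α - (s + t) ^ α)) ∧
    (∀ (n : ℕ) (u : Fin n → ℝ), (∀ i, 0 < u i) → ∀ c : Fin n → ℝ,
      0 ≤ ∑ i, ∑ j, c i * c j * (u i ^ α + u j ^ α - (u i + u j) ^ α)) := by
  refine ⟨integral_one_sub_exp_mul_one_sub_exp_Ioi hα0 hα1 hs ht, fun n u hu c => ?_⟩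
  have hΓ : 0 < Gamma (1 - α) := Gamma_pos_of_pos (sub_pos.2 hα1)
  have hgram : ∀ i j, u i ^ α + u j ^ α - (u i + u j) ^ α = (Gamma (1 - α))⁻¹ *
      ∫ x in Ioi 0, (1 - exp (-(u i * x ^ (-(1 / α))))) * (1 - exp (-(u j * x ^ (-(1 / α))))) :=
    fun i j => by
      rw [integral_one_sub_exp_mul_one_sub_exp_Ioi hα0 hα1 (hu i) (hu j),
        inv_mul_cancel_left₀ hΓ.ne']
  simp_rw [hgram, mul_left_comm _ (Gamma (1 - α))⁻¹, ← Finset.mul_sum]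
  exact mul_nonneg (inv_nonneg.2 hΓ.le) <| sum_sum_mul_integral_mul_nonneg
    (f := fun i x => 1 - exp (-(u i * x ^ (-(1 / α)))))
    (fun i j => integrableOn_one_sub_exp_mul_one_sub_exp hα0 hα1 (hu i).le (hu j).le) c
end

section
/- Small-time estimate in the de-Poissonization step (equation (eq:small t)): if Γ : ℕ → [0, ∞) is nondecreasing with Γ_0 = 0 and Γ_n / n → 1 as n → ∞, then for every α ∈ (0,1) and every β > 1/2, lim_{n→∞} n^{α/2} sup_{t ∈ [0, n^{-β}]} | (Γ_{⌊n t⌋} / n)^α - t^α | = 0. -/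
open Filter Set Topology

/-!
Since `Γ n / n → 1`, `Γ` grows at most linearly: `Γ m ≤ C (m + 1)`. For `t ≤ n^{-β}` this gives
`Γ_{⌊nt⌋} / n ≤ C (n^{-β} + n⁻¹)`, so both terms of the difference are at most of order
`(n^{-β} + n⁻¹)^α`, and the prefactor `n^{α/2}` turns them into `(C (n^{1/2-β} + n^{-1/2}))^α` and
`(n^{1/2-β})^α`, which tend to `0` because `β > 1/2`.
-/

lemma exists_le_mul_add_one_of_tendsto_div {u : ℕ → ℝ} {l : ℝ}
    (h : Tendsto (fun n : ℕ => u n / n) atTop (𝓝 l)) :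
    ∃ C, 0 ≤ C ∧ ∀ n : ℕ, u n ≤ C * (n + 1) := by
  have h' : Tendsto (fun n : ℕ => u n / (n + 1)) atTop (𝓝 l) := by
    have := h.mul (tendsto_natCast_div_add_atTop (1 : ℝ))
    rw [mul_one] at this
    refine this.congr' ?_
    filter_upwards [eventually_gt_atTop 0] with n hn
    have : (n : ℝ) ≠ 0 := by positivity
    field_simp
  obtain ⟨C, hC⟩ := h'.bddAbove_range
  refine ⟨max C 0, le_max_right _ _, fun n => ?_⟩
  calc u n ≤ C * (n + 1) := (div_le_iff₀ (by positivity)).1 (hC ⟨n, rfl⟩)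
    _ ≤ max C 0 * (n + 1) := by gcongr; exact le_max_left _ _

lemma abs_rpow_sub_rpow_le_add {x t a b α : ℝ} (hx : 0 ≤ x) (hxa : x ≤ a) (ht : 0 ≤ t)
    (htb : t ≤ b) (hα : 0 ≤ α) : |x ^ α - t ^ α| ≤ a ^ α + b ^ α := by
  have hxa' : x ^ α ≤ a ^ α := Real.rpow_le_rpow hx hxa hα
  have htb' : t ^ α ≤ b ^ α := Real.rpow_le_rpow ht htb hα
  have ha : 0 ≤ a ^ α := Real.rpow_nonneg (hx.trans hxa) α
  have hb : 0 ≤ b ^ α := Real.rpow_nonneg (ht.trans htb) α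
  exact abs_sub_le_of_nonneg_of_le (Real.rpow_nonneg hx α) (by linarith)
    (Real.rpow_nonneg ht α) (by linarith)

lemma iSup_abs_rpow_floor_sub_rpow_le {Γ : ℕ → ℝ} {C α n T : ℝ} (hΓ : ∀ m, 0 ≤ Γ m)
    (hC0 : 0 ≤ C) (hC : ∀ m : ℕ, Γ m ≤ C * (m + 1)) (hα : 0 ≤ α) (hn : 0 < n) (hT : 0 ≤ T) :
    ⨆ t : Icc (0 : ℝ) T, |(Γ ⌊n * t⌋₊ / n) ^ α - (t : ℝ) ^ α| ≤ (C * (T + n⁻¹)) ^ α + T ^ α := by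
  refine Real.iSup_le (fun ⟨t, ht0, htT⟩ => ?_) (by positivity)
  have hfloor : (⌊n * t⌋₊ : ℝ) ≤ n * T :=
    (Nat.floor_le (by positivity)).trans (mul_le_mul_of_nonneg_left htT hn.le)
  have hbound : Γ ⌊n * t⌋₊ / n ≤ C * (T + n⁻¹) := by
    rw [div_le_iff₀ hn]
    calc Γ ⌊n * t⌋₊ ≤ C * (⌊n * t⌋₊ + 1) := hC _
      _ ≤ C * (n * T + 1) := by gcongr
      _ = C * (T + n⁻¹) * n := by field_simp
  exact abs_rpow_sub_rpow_le_add (div_nonneg (hΓ _) hn.le) hbound ht0 htT hα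

lemma tendsto_rpow_half_mul_rpow_neg {γ : ℝ} (hγ : 1 / 2 < γ) :
    Tendsto (fun n : ℕ => (n : ℝ) ^ (1 / 2 : ℝ) * (n : ℝ) ^ (-γ)) atTop (𝓝 0) := by
  refine ((tendsto_rpow_neg_atTop (by linarith : 0 < γ - 1 / 2)).comp
    tendsto_natCast_atTop_atTop).congr' ?_
  filter_upwards [eventually_gt_atTop 0] with n hn
  rw [Function.comp_apply, ← Real.rpow_add (by positivity)]
  ring_nf

lemma tendsto_rpow_half_mul_bound {C α β : ℝ} (hC0 : 0 ≤ C) (hα : 0 < α) (hβ : 1 / 2 < β) :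
    Tendsto (fun n : ℕ => (n : ℝ) ^ (α / 2) *
      ((C * ((n : ℝ) ^ (-β) + (n : ℝ)⁻¹)) ^ α + ((n : ℝ) ^ (-β)) ^ α)) atTop (𝓝 0) := by
  have hβ' := tendsto_rpow_half_mul_rpow_neg hβ
  have hone := tendsto_rpow_half_mul_rpow_neg (by norm_num : (1 / 2 : ℝ) < 1)
  simp only [Real.rpow_neg_one] at hone
  have hA : Tendsto (fun n : ℕ => (n : ℝ) ^ (1 / 2 : ℝ) * (C * ((n : ℝ) ^ (-β) + (n : ℝ)⁻¹)))
      atTop (𝓝 0) := by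
    simpa [mul_add, mul_left_comm] using (hβ'.add hone).const_mul C
  have := (hA.rpow_const (Or.inr hα.le)).add (hβ'.rpow_const (Or.inr hα.le))
  rw [Real.zero_rpow hα.ne', add_zero] at this
  refine this.congr fun n => ?_
  have hn : (0 : ℝ) ≤ n := n.cast_nonneg
  have hsqrt : (0 : ℝ) ≤ (n : ℝ) ^ (1 / 2 : ℝ) := by positivity
  rw [Real.mul_rpow hsqrt (by positivity), Real.mul_rpow hsqrt (by positivity),
    ← Real.rpow_mul hn, mul_add]
  ring_nf

theorem small_time_estimate_general (Γ : ℕ → ℝ) (hnonneg : ∀ n, 0 ≤ Γ n)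
    (hlim : Tendsto (fun n : ℕ => Γ n / (n : ℝ)) atTop (nhds 1))
    (α β : ℝ) (hα0 : 0 < α) (hβ : 1 / 2 < β) :
    Tendsto (fun n : ℕ => (n : ℝ) ^ (α / 2) *
        ⨆ t : Set.Icc (0 : ℝ) ((n : ℝ) ^ (-β)),
          |(Γ ⌊(n : ℝ) * (t : ℝ)⌋₊ / (n : ℝ)) ^ α - (t : ℝ) ^ α|)
      atTop (nhds 0) := by
  obtain ⟨C, hC0, hC⟩ := exists_le_mul_add_one_of_tendsto_div hlim
  refine squeeze_zero' (Eventually.of_forall fun n => ?_) ?_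
    (tendsto_rpow_half_mul_bound hC0 hα0 hβ)
  · exact mul_nonneg (by positivity) (Real.iSup_nonneg fun _ => abs_nonneg _)
  · filter_upwards [eventually_gt_atTop 0] with n hn
    have hn' : (0 : ℝ) < n := by exact_mod_cast hn
    exact mul_le_mul_of_nonneg_left
      (iSup_abs_rpow_floor_sub_rpow_le hnonneg hC0 hC hα0.le hn' (by positivity)) (by positivity)

/-- **Small-time estimate in the de-Poissonization step** (equation (eq:small t)):
if `Γ : ℕ → [0,∞)` is nondecreasing with `Γ 0 = 0` and `Γ n / n → 1`, then for every
`α ∈ (0,1)` and `β > 1/2`, `n^{α/2} sup_{t ∈ [0, n^{-β}]} |(Γ_{⌊nt⌋}/n)^α - t^α| → 0`. -/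
theorem small_time_estimate (Γ : ℕ → ℝ) (hnonneg : ∀ n, 0 ≤ Γ n)
    (hmono : Monotone Γ) (hΓ0 : Γ 0 = 0)
    (hlim : Tendsto (fun n : ℕ => Γ n / (n : ℝ)) atTop (nhds 1))
    (α β : ℝ) (hα0 : 0 < α) (hα1 : α < 1) (hβ : 1 / 2 < β) :
    Tendsto (fun n : ℕ => (n : ℝ) ^ (α / 2) *
        ⨆ t : Set.Icc (0 : ℝ) ((n : ℝ) ^ (-β)),
          |(Γ ⌊(n : ℝ) * (t : ℝ)⌋₊ / (n : ℝ)) ^ α - (t : ℝ) ^ α|)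
      atTop (nhds 0) :=
  small_time_estimate_general Γ hnonneg hlim α β hα0 hβ
end

section
/- Large-time estimate in the de-Poissonization step (equation (eq:An)), deterministic form under a law-of-the-iterated-logarithm bound: let α ∈ (0,1) and let β > 1/2, with additionally β < (1-α)/(1-2α) in the case α < 1/2. Let Γ : ℕ → [0, ∞) be nondecreasing with Γ_0 = 0, and suppose there exist constants C > 0 and n₀ ≥ 3 such that |Γ_n - n| ≤ C (n log log n)^{1/2} for all n ≥ n₀. Then lim_{n→∞} n^{α/2} sup_{t ∈ [n^{-β}, 1]} | (Γ_{⌊n t⌋} / n)^α - t^α | = 0. -/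
open Filter Set

/-!
Write `s = n t` and `m = ⌊s⌋`, so that `n^{α/2} |(Γ_m/n)^α - t^α| = n^{-α/2} |Γ_m^α - s^α|`.
For `0 < α ≤ 1` one has `|x^α - s^α| ≤ s^{α-1} |x - s|`. When `s < n₀` both `Γ_m` and `s` are
bounded by a constant; otherwise the law of the iterated logarithm and `|m - s| ≤ 1` give
`|Γ_m - s| ≤ C (s log log n)^{1/2} + 1`, hence `|Γ_m^α - s^α| ≤ C (log log n)^{1/2} s^{α-1/2} + 1`.
Since `s ∈ [n^{1-β}, n]`, the factor `s^{α-1/2}` is at most `n^M` with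
`M = max ((1-β)(α-1/2)) (α-1/2)`, and the restriction on `β` is exactly `M < α/2`.
Powers of `log log n` are negligible against powers of `n`, so the whole bound tends to `0`.
-/

namespace Real

theorem abs_rpow_sub_rpow_le {α x y : ℝ} (hα0 : 0 ≤ α) (hα1 : α ≤ 1) (hx : 0 ≤ x)
    (hy : 0 < y) : |x ^ α - y ^ α| ≤ y ^ (α - 1) * |x - y| := by
  have hyα : y ^ α = y * y ^ (α - 1) := by rw [rpow_sub_one hy.ne', mul_div_cancel₀ _ hy.ne']
  rcases le_total y x with hyx | hxy
  · have hx0 : 0 < x := hy.trans_le hyx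
    have hxα : x ^ α ≤ x * y ^ (α - 1) :=
      calc x ^ α = x * x ^ (α - 1) := by rw [rpow_sub_one hx0.ne', mul_div_cancel₀ _ hx0.ne']
        _ ≤ x * y ^ (α - 1) :=
          mul_le_mul_of_nonneg_left (rpow_le_rpow_of_nonpos hy hyx (by linarith)) hx0.le
    rw [abs_of_nonneg (sub_nonneg.2 (rpow_le_rpow hy.le hyx hα0)),
      abs_of_nonneg (sub_nonneg.2 hyx)]
    linarith
  · have hxα : x * y ^ (α - 1) ≤ x ^ α := by
      rcases hx.eq_or_lt with rfl | hx0
      · rw [zero_mul]; exact rpow_nonneg le_rfl α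
      calc x * y ^ (α - 1) ≤ x * x ^ (α - 1) :=
            mul_le_mul_of_nonneg_left (rpow_le_rpow_of_nonpos hx0 hxy (by linarith)) hx0.le
        _ = x ^ α := by rw [rpow_sub_one hx0.ne', mul_div_cancel₀ _ hx0.ne']
    rw [abs_of_nonpos (sub_nonpos.2 (rpow_le_rpow hx hxy hα0)), abs_of_nonpos (sub_nonpos.2 hxy)]
    linarith

theorem abs_div_rpow_sub_rpow {α x y t : ℝ} (hx : 0 ≤ x) (hy : 0 < y) (ht : 0 ≤ t) :
    |(x / y) ^ α - t ^ α| = |x ^ α - (y * t) ^ α| / y ^ α := by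
  have hyα : 0 < y ^ α := rpow_pos_of_pos hy α
  have h : (x / y) ^ α - t ^ α = (x ^ α - (y * t) ^ α) / y ^ α := by
    rw [div_rpow hx hy.le, mul_rpow hy.le ht]; field_simp
  rw [h, abs_div, abs_of_pos hyα]

theorem rpow_le_rpow_max_mul_of_mem_Icc {x a b s p : ℝ} (hx : 1 ≤ x)
    (hs : s ∈ Icc (x ^ a) (x ^ b)) : s ^ p ≤ x ^ max (a * p) (b * p) := by
  have hx0 : 0 < x := one_pos.trans_le hx
  have hxa : 0 < x ^ a := rpow_pos_of_pos hx0 a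
  rcases le_total 0 p with hp | hp
  · calc s ^ p ≤ (x ^ b) ^ p := rpow_le_rpow (hxa.trans_le hs.1).le hs.2 hp
      _ = x ^ (b * p) := (rpow_mul hx0.le b p).symm
      _ ≤ x ^ max (a * p) (b * p) := rpow_le_rpow_of_exponent_le hx (le_max_right _ _)
  · calc s ^ p ≤ (x ^ a) ^ p := rpow_le_rpow_of_nonpos hxa hs.1 hp
      _ = x ^ (a * p) := (rpow_mul hx0.le a p).symm
      _ ≤ x ^ max (a * p) (b * p) := rpow_le_rpow_of_exponent_le hx (le_max_left _ _)

theorem one_le_log_of_three_le {x : ℝ} (hx : 3 ≤ x) : 1 ≤ log x := by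
  rw [le_log_iff_exp_le (by linarith)]
  linarith [exp_one_lt_d9]

theorem tendsto_log_log_rpow_mul_rpow_atTop {e : ℝ} (he : e < 0) :
    Tendsto (fun x : ℝ => log (log x) ^ (1 / 2 : ℝ) * x ^ e) atTop (nhds 0) := by
  have hlog : (fun x => log x ^ (1 / 2 : ℝ)) =o[atTop] fun x => x ^ (-e) :=
    isLittleO_log_rpow_rpow_atTop _ (neg_pos.2 he)
  have hloglog : (fun x => log (log x) ^ (1 / 2 : ℝ)) =O[atTop] fun x => log x ^ (1 / 2 : ℝ) := by
    refine Asymptotics.IsBigO.of_bound' ?_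
    filter_upwards [eventually_ge_atTop 3] with x hx
    have hlogx := one_le_log_of_three_le hx
    have hLL : 0 ≤ log (log x) := log_nonneg hlogx
    rw [norm_of_nonneg (rpow_nonneg hLL _), norm_of_nonneg (rpow_nonneg (by linarith) _)]
    exact rpow_le_rpow hLL (log_le_self (by linarith)) (by norm_num)
  refine (hloglog.trans_isLittleO hlog).tendsto_div_nhds_zero.congr' ?_
  filter_upwards [eventually_gt_atTop 0] with x hx
  rw [div_eq_mul_inv, ← rpow_neg hx.le, neg_neg]

end Real

open Real

section LawOfIteratedLogarithm

variable {Γ : ℕ → ℝ} {α C : ℝ} {n₀ : ℕ}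

theorem abs_floor_sub_le_of_lil (hC : 0 ≤ C) (hn₀ : 3 ≤ n₀)
    (hLIL : ∀ n : ℕ, n₀ ≤ n →
      |Γ n - (n : ℝ)| ≤ C * ((n : ℝ) * log (log (n : ℝ))) ^ ((1 : ℝ) / 2))
    {n : ℕ} {s : ℝ} (hs : (n₀ : ℝ) ≤ s) (hsn : s ≤ n) :
    |Γ ⌊s⌋₊ - s| ≤ C * (s * log (log n)) ^ ((1 : ℝ) / 2) + 1 := by
  set m := ⌊s⌋₊
  have hm : n₀ ≤ m := Nat.le_floor hs
  have hm3 : (3 : ℝ) ≤ m := by exact_mod_cast hn₀.trans hm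
  have hms : (m : ℝ) ≤ s := Nat.floor_le (by linarith)
  have hlogm := one_le_log_of_three_le hm3
  have hLL : log (log m) ≤ log (log n) :=
    log_le_log (by linarith) (log_le_log (by linarith) (hms.trans hsn))
  have hfloor : |(m : ℝ) - s| ≤ 1 := by
    rw [abs_sub_comm, abs_of_nonneg (by linarith)]
    linarith [Nat.lt_floor_add_one s]
  calc |Γ m - s| ≤ |Γ m - m| + |(m : ℝ) - s| := abs_sub_le _ _ _
    _ ≤ C * (m * log (log m)) ^ ((1 : ℝ) / 2) + 1 := add_le_add (hLIL m hm) hfloor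
    _ ≤ C * (s * log (log n)) ^ ((1 : ℝ) / 2) + 1 := by
      have := log_nonneg hlogm
      have : 0 ≤ s := by linarith
      gcongr

theorem abs_rpow_floor_sub_rpow_le_of_lil (hα0 : 0 ≤ α) (hα1 : α ≤ 1) (hnonneg : ∀ n, 0 ≤ Γ n)
    (hC : 0 ≤ C) (hn₀ : 3 ≤ n₀)
    (hLIL : ∀ n : ℕ, n₀ ≤ n →
      |Γ n - (n : ℝ)| ≤ C * ((n : ℝ) * log (log (n : ℝ))) ^ ((1 : ℝ) / 2))
    {n : ℕ} {s : ℝ} (hs : (n₀ : ℝ) ≤ s) (hsn : s ≤ n) :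
    |Γ ⌊s⌋₊ ^ α - s ^ α| ≤ C * log (log n) ^ ((1 : ℝ) / 2) * s ^ (α - 1 / 2) + 1 := by
  have hs1 : 1 ≤ s := le_trans (by exact_mod_cast (by omega : 1 ≤ n₀)) hs
  have hs0 : 0 < s := one_pos.trans_le hs1
  have hLL : 0 ≤ log (log n) :=
    log_nonneg (one_le_log_of_three_le (le_trans (by exact_mod_cast hn₀) (hs.trans hsn)))
  calc |Γ ⌊s⌋₊ ^ α - s ^ α| ≤ s ^ (α - 1) * |Γ ⌊s⌋₊ - s| :=
        abs_rpow_sub_rpow_le hα0 hα1 (hnonneg _) hs0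
    _ ≤ s ^ (α - 1) * (C * (s * log (log n)) ^ ((1 : ℝ) / 2) + 1) := by
        gcongr; exact abs_floor_sub_le_of_lil hC hn₀ hLIL hs hsn
    _ = C * log (log n) ^ ((1 : ℝ) / 2) * s ^ (α - 1 / 2) + s ^ (α - 1) := by
        rw [mul_rpow hs0.le hLL, show α - 1 / 2 = (α - 1) + 1 / 2 by ring, rpow_add hs0]
        ring
    _ ≤ C * log (log n) ^ ((1 : ℝ) / 2) * s ^ (α - 1 / 2) + 1 := by
        gcongr; exact rpow_le_one_of_one_le_of_nonpos hs1 (by linarith)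

theorem abs_rpow_floor_sub_rpow_le_of_lt (hα0 : 0 ≤ α) (hnonneg : ∀ n, 0 ≤ Γ n)
    (hmono : Monotone Γ) {s : ℝ} (hs0 : 0 ≤ s) (hs : s < n₀) :
    |Γ ⌊s⌋₊ ^ α - s ^ α| ≤ max (Γ n₀) n₀ ^ α :=
  abs_sub_le_of_nonneg_of_le (rpow_nonneg (hnonneg _) α)
    (rpow_le_rpow (hnonneg _) ((hmono (Nat.floor_le_of_le hs.le)).trans (le_max_left _ _)) hα0)
    (rpow_nonneg hs0 α) (rpow_le_rpow hs0 (hs.le.trans (le_max_right _ _)) hα0)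

theorem abs_rpow_floor_sub_rpow_le (hα0 : 0 ≤ α) (hα1 : α ≤ 1) (hnonneg : ∀ n, 0 ≤ Γ n)
    (hmono : Monotone Γ) (hC : 0 ≤ C) (hn₀ : 3 ≤ n₀)
    (hLIL : ∀ n : ℕ, n₀ ≤ n →
      |Γ n - (n : ℝ)| ≤ C * ((n : ℝ) * log (log (n : ℝ))) ^ ((1 : ℝ) / 2))
    {n : ℕ} (hn : n₀ ≤ n) {s : ℝ} (hs0 : 0 ≤ s) (hsn : s ≤ n) :
    |Γ ⌊s⌋₊ ^ α - s ^ α| ≤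
      max (Γ n₀) n₀ ^ α + 1 + C * log (log n) ^ ((1 : ℝ) / 2) * s ^ (α - 1 / 2) := by
  have hK : 0 ≤ max (Γ n₀) n₀ ^ α := rpow_nonneg ((hnonneg n₀).trans (le_max_left _ _)) α
  rcases lt_or_ge s n₀ with hs | hs
  · have hLL : 0 ≤ log (log n) :=
      log_nonneg (one_le_log_of_three_le (by exact_mod_cast hn₀.trans hn))
    have : 0 ≤ C * log (log n) ^ ((1 : ℝ) / 2) * s ^ (α - 1 / 2) := by positivity
    linarith [abs_rpow_floor_sub_rpow_le_of_lt hα0 hnonneg hmono hs0 hs]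
  · linarith [abs_rpow_floor_sub_rpow_le_of_lil hα0 hα1 hnonneg hC hn₀ hLIL hs hsn]

theorem rpow_mul_abs_rpow_floor_div_sub_rpow_le (hα0 : 0 ≤ α) (hα1 : α ≤ 1)
    (hnonneg : ∀ n, 0 ≤ Γ n) (hmono : Monotone Γ) (hC : 0 ≤ C) (hn₀ : 3 ≤ n₀)
    (hLIL : ∀ n : ℕ, n₀ ≤ n →
      |Γ n - (n : ℝ)| ≤ C * ((n : ℝ) * log (log (n : ℝ))) ^ ((1 : ℝ) / 2))
    {n : ℕ} (hn : n₀ ≤ n) {β t : ℝ} (ht : t ∈ Icc ((n : ℝ) ^ (-β)) 1) :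
    (n : ℝ) ^ (α / 2) * |(Γ ⌊(n : ℝ) * t⌋₊ / n) ^ α - t ^ α| ≤
      (max (Γ n₀) n₀ ^ α + 1) * (n : ℝ) ^ (-(α / 2)) +
        C * (log (log n) ^ ((1 : ℝ) / 2) *
          (n : ℝ) ^ (max ((1 - β) * (α - 1 / 2)) (α - 1 / 2) - α / 2)) := by
  set M := max ((1 - β) * (α - 1 / 2)) (α - 1 / 2)
  have hn1 : (1 : ℝ) ≤ n := by exact_mod_cast (by omega : 1 ≤ n)
  have hn0 : (0 : ℝ) < n := one_pos.trans_le hn1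
  have ht0 : 0 < t := (rpow_pos_of_pos hn0 _).trans_le ht.1
  have hs : (n : ℝ) * t ∈ Icc ((n : ℝ) ^ (1 - β)) ((n : ℝ) ^ (1 : ℝ)) := by
    rw [sub_eq_add_neg, rpow_add hn0, rpow_one]
    exact ⟨mul_le_mul_of_nonneg_left ht.1 hn0.le, mul_le_of_le_one_right hn0.le ht.2⟩
  have hsM : ((n : ℝ) * t) ^ (α - 1 / 2) ≤ (n : ℝ) ^ M := by
    have := rpow_le_rpow_max_mul_of_mem_Icc (p := α - 1 / 2) hn1 hs
    rwa [one_mul] at this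
  have hLL : 0 ≤ log (log n) :=
    log_nonneg (one_le_log_of_three_le (by exact_mod_cast hn₀.trans hn))
  have hscale : (n : ℝ) ^ (α / 2) / (n : ℝ) ^ α = (n : ℝ) ^ (-(α / 2)) := by
    rw [← rpow_sub hn0]; ring_nf
  have hshift : (n : ℝ) ^ (M - α / 2) = (n : ℝ) ^ M * (n : ℝ) ^ (-(α / 2)) := by
    rw [← rpow_add hn0]; ring_nf
  rw [abs_div_rpow_sub_rpow (hnonneg _) hn0 ht0.le]
  calc (n : ℝ) ^ (α / 2) * (|Γ ⌊(n : ℝ) * t⌋₊ ^ α - ((n : ℝ) * t) ^ α| / (n : ℝ) ^ α)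
      ≤ (n : ℝ) ^ (α / 2) *
          ((max (Γ n₀) n₀ ^ α + 1 + C * log (log n) ^ ((1 : ℝ) / 2) * (n : ℝ) ^ M) /
            (n : ℝ) ^ α) := by
        gcongr
        refine (abs_rpow_floor_sub_rpow_le hα0 hα1 hnonneg hmono hC hn₀ hLIL hn
          (by positivity) (mul_le_of_le_one_right hn0.le ht.2)).trans ?_
        gcongr
    _ = _ := by rw [hshift, ← hscale]; ring

end LawOfIteratedLogarithm

theorem large_time_estimate_general (Γ : ℕ → ℝ) (hnonneg : ∀ n, 0 ≤ Γ n)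
    (hmono : Monotone Γ)
    (α β : ℝ) (hα0 : 0 < α) (hα1 : α < 1) (hβ : 1 / 2 < β)
    (hβ' : α < 1 / 2 → β < (1 - α) / (1 - 2 * α))
    (C : ℝ) (hC : 0 < C) (n₀ : ℕ) (hn₀ : 3 ≤ n₀)
    (hLIL : ∀ n : ℕ, n₀ ≤ n →
      |Γ n - (n : ℝ)| ≤ C * ((n : ℝ) * Real.log (Real.log (n : ℝ))) ^ ((1 : ℝ) / 2)) :
    Tendsto (fun n : ℕ => (n : ℝ) ^ (α / 2) *
        ⨆ t : Set.Icc ((n : ℝ) ^ (-β)) 1,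
          |(Γ ⌊(n : ℝ) * (t : ℝ)⌋₊ / (n : ℝ)) ^ α - (t : ℝ) ^ α|)
      atTop (nhds 0) := by
  set M := max ((1 - β) * (α - 1 / 2)) (α - 1 / 2)
  have hM : M - α / 2 < 0 := by
    refine sub_neg.2 (max_lt ?_ (by linarith))
    rcases lt_or_ge α (1 / 2) with h | h
    · have := (lt_div_iff₀ (by linarith)).1 (hβ' h)
      nlinarith
    · nlinarith
  have hlim : Tendsto (fun n : ℕ => (max (Γ n₀) n₀ ^ α + 1) * (n : ℝ) ^ (-(α / 2)) +
      C * (log (log n) ^ ((1 : ℝ) / 2) * (n : ℝ) ^ (M - α / 2))) atTop (nhds 0) := by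
    have h1 := (tendsto_rpow_neg_atTop (half_pos hα0)).comp tendsto_natCast_atTop_atTop
    have h2 := (tendsto_log_log_rpow_mul_rpow_atTop hM).comp tendsto_natCast_atTop_atTop
    simpa using (h1.const_mul (max (Γ n₀) n₀ ^ α + 1)).add (h2.const_mul C)
  refine squeeze_zero' (Eventually.of_forall fun n => mul_nonneg (rpow_nonneg n.cast_nonneg _)
    (iSup_nonneg fun _ => abs_nonneg _)) ?_ hlim
  filter_upwards [eventually_ge_atTop n₀] with n hn
  have hLL : 0 ≤ log (log n) :=
    log_nonneg (one_le_log_of_three_le (by exact_mod_cast hn₀.trans hn))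
  rw [Real.mul_iSup_of_nonneg (rpow_nonneg n.cast_nonneg _)]
  refine Real.iSup_le (fun t => ?_) (by positivity)
  exact rpow_mul_abs_rpow_floor_div_sub_rpow_le hα0.le hα1.le hnonneg hmono hC.le hn₀ hLIL hn t.2

/-- **Large-time estimate in the de-Poissonization step** (equation (eq:An)),
deterministic form under a law-of-the-iterated-logarithm bound: let `α ∈ (0,1)`,
`β > 1/2`, with additionally `β < (1-α)/(1-2α)` when `α < 1/2`. If `Γ : ℕ → [0,∞)` is
nondecreasing with `Γ 0 = 0` and `|Γ n - n| ≤ C (n log log n)^{1/2}` for all `n ≥ n₀`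
(for some `C > 0`, `n₀ ≥ 3`), then
`n^{α/2} sup_{t ∈ [n^{-β}, 1]} |(Γ_{⌊nt⌋}/n)^α - t^α| → 0`. -/
theorem large_time_estimate (Γ : ℕ → ℝ) (hnonneg : ∀ n, 0 ≤ Γ n)
    (hmono : Monotone Γ) (hΓ0 : Γ 0 = 0)
    (α β : ℝ) (hα0 : 0 < α) (hα1 : α < 1) (hβ : 1 / 2 < β)
    (hβ' : α < 1 / 2 → β < (1 - α) / (1 - 2 * α))
    (C : ℝ) (hC : 0 < C) (n₀ : ℕ) (hn₀ : 3 ≤ n₀)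
    (hLIL : ∀ n : ℕ, n₀ ≤ n →
      |Γ n - (n : ℝ)| ≤ C * ((n : ℝ) * Real.log (Real.log (n : ℝ))) ^ ((1 : ℝ) / 2)) :
    Tendsto (fun n : ℕ => (n : ℝ) ^ (α / 2) *
        ⨆ t : Set.Icc ((n : ℝ) ^ (-β)) 1,
          |(Γ ⌊(n : ℝ) * (t : ℝ)⌋₊ / (n : ℝ)) ^ α - (t : ℝ) ^ α|)
      atTop (nhds 0) :=
  large_time_estimate_general Γ hnonneg hmono α β hα0 hα1 hβ hβ' C hC n₀ hn₀ hLIL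
end

section
/- Negligibility of the centering discrepancy in the de-Poissonization (the claim lim_n ŵd_n = 0 almost surely, equation (eq:center diff)): for every α ∈ (0,1), almost surely lim_{n→∞} n^{α/2} sup_{t ∈ [0,1]} | (Γ_{⌊n t⌋} / n)^α - t^α | = 0; equivalently, sup_{t ∈ [0,1]} | (n λ_n(t))^α - (n t)^α | = o(n^{α/2}) almost surely, where λ_n(t) = Γ_{⌊n t⌋}/n. -/
/-!
Write `Γ_j = j + Δ_j`. A Chernoff bound with the exponential moment generating function gives
`P(|Δ_j| ≥ j^β) ≤ 2 exp(-j^(2β-1)/8)`, which is summable for `β > 1/2`, so by Borel–Cantelli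
`|Δ_j| ≤ C + j^β` for all `j`, almost surely. The rest is deterministic: for `t ≤ n^(-γ)` the
error `|Γ_⌊nt⌋/n - t| ≲ n^(β(1-γ)-1)` is small and the Hölder bound `|x^α - t^α| ≤ |x - t|^α`
suffices, while for `t ≥ n^(-γ)` the bound `|x^α - t^α| ≤ t^(α-1) |x - t|` costs only
`n^(γ(1-α))`. With `β = 1/2 + (1-α)/8` and `γ = 1/4` both terms are `o(n^(-α/2))`.
-/

open MeasureTheory ProbabilityTheory Filter Real

/-- Arrival times of the standard Poisson process: `Γ_j = E_1 + ⋯ + E_j` (`Γ_0 = 0`). -/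
noncomputable def arrival {Ω : Type*} (E : ℕ → Ω → ℝ) (j : ℕ) (ω : Ω) : ℝ :=
  ∑ k ∈ Finset.range j, E k ω

open scoped Topology

theorem abs_rpow_sub_rpow_le_abs_sub_rpow {x y p : ℝ} (hx : 0 ≤ x) (hy : 0 ≤ y) (hp0 : 0 ≤ p)
    (hp1 : p ≤ 1) : |x ^ p - y ^ p| ≤ |x - y| ^ p := by
  wlog hyx : y ≤ x generalizing x y
  · rw [abs_sub_comm, abs_sub_comm x]
    exact this hy hx (le_of_not_ge hyx)
  have hmono : y ^ p ≤ x ^ p := rpow_le_rpow hy hyx hp0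
  have hsub : x ^ p ≤ y ^ p + (x - y) ^ p := by
    simpa using rpow_add_le_add_rpow hy (sub_nonneg.2 hyx) hp0 hp1
  rw [abs_of_nonneg (sub_nonneg.2 hmono), abs_of_nonneg (sub_nonneg.2 hyx)]
  linarith

theorem abs_rpow_sub_one_le_abs_sub_one {u p : ℝ} (hu : 0 ≤ u) (hp0 : 0 ≤ p) (hp1 : p ≤ 1) :
    |u ^ p - 1| ≤ |u - 1| := by
  rcases le_total 1 u with h | h
  · have hle : u ^ p ≤ u := by simpa using rpow_le_rpow_of_exponent_le h hp1
    have hge : 1 ≤ u ^ p := one_le_rpow h hp0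
    rw [abs_of_nonneg (by linarith), abs_of_nonneg (by linarith)]
    linarith
  · have hge : u ≤ u ^ p := by simpa using rpow_le_rpow_of_exponent_ge' hu h hp0 hp1
    have hle : u ^ p ≤ 1 := rpow_le_one hu h hp0
    rw [abs_of_nonpos (by linarith), abs_of_nonpos (by linarith)]
    linarith

theorem abs_rpow_sub_rpow_le_rpow_sub_one_mul {x y p : ℝ} (hx : 0 ≤ x) (hy : 0 < y)
    (hp0 : 0 ≤ p) (hp1 : p ≤ 1) : |x ^ p - y ^ p| ≤ y ^ (p - 1) * |x - y| := by
  have hyp : 0 < y ^ p := rpow_pos_of_pos hy p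
  calc |x ^ p - y ^ p| = y ^ p * |(x / y) ^ p - 1| := by
        rw [div_rpow hx hy.le, ← abs_of_pos hyp, ← abs_mul, abs_of_pos hyp, mul_sub,
          mul_div_cancel₀ _ hyp.ne', mul_one]
    _ ≤ y ^ p * |x / y - 1| :=
        mul_le_mul_of_nonneg_left
          (abs_rpow_sub_one_le_abs_sub_one (div_nonneg hx hy.le) hp0 hp1) hyp.le
    _ = y ^ (p - 1) * |x - y| := by
        rw [rpow_sub_one hy.ne', div_sub_one hy.ne', abs_div, abs_of_pos hy]
        ring

theorem mgf_id_expMeasure {r s : ℝ} (hr : 0 < r) (hs : s < r) :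
    mgf id (expMeasure r) s = r / (r - s) := by
  have hdens : ∀ x, (exponentialPDF r x).toReal • exp (s * x)
      = Set.indicator (Set.Ici 0) (fun x => r * exp ((s - r) * x)) x := by
    intro x
    by_cases hx : 0 ≤ x
    · rw [exponentialPDF_of_nonneg hx, ENNReal.toReal_ofReal (by positivity),
        Set.indicator_of_mem (Set.mem_Ici.2 hx), smul_eq_mul, mul_assoc, ← exp_add]
      ring_nf
    · rw [exponentialPDF_of_neg (not_le.1 hx), Set.indicator_of_notMem (by simpa using hx)]
      simp
  calc mgf id (expMeasure r) s
      = ∫ x, (exponentialPDF r x).toReal • exp (s * x) :=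
        integral_withDensity_eq_integral_toReal_smul (measurable_gammaPDFReal 1 r).ennreal_ofReal
          (ae_of_all _ fun _ => ENNReal.ofReal_lt_top) _
    _ = ∫ x in Set.Ioi 0, r * exp ((s - r) * x) := by
        simp_rw [hdens]
        rw [integral_indicator measurableSet_Ici, integral_Ici_eq_integral_Ioi]
    _ = r / (r - s) := by
        rw [integral_const_mul, integral_exp_mul_Ioi (by linarith), mul_zero, exp_zero,
          neg_div, ← div_neg, neg_sub, mul_one_div]

theorem inv_one_sub_le_exp_add_two_mul_sq {s : ℝ} (hs : |s| ≤ 1 / 2) :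
    (1 - s)⁻¹ ≤ exp (s + 2 * s ^ 2) := by
  have hlog := abs_log_sub_add_sum_range_le (x := s) (by linarith) 1
  simp only [Finset.range_one, Finset.sum_singleton, zero_add, pow_one, Nat.cast_zero,
    div_one] at hlog
  have h1 : 0 < 1 - s := by linarith [le_abs_self s]
  have hq : |s| ^ 2 / (1 - |s|) ≤ 2 * s ^ 2 := by
    rw [div_le_iff₀ (by linarith), sq_abs]
    nlinarith [sq_nonneg s]
  rw [← exp_log (inv_pos.2 h1), log_inv, exp_le_exp]
  linarith [neg_abs_le (s + log (1 - s))]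

theorem summable_exp_neg_mul_rpow {a ε : ℝ} (ha : 0 < a) (hε : 0 < ε) :
    Summable fun j : ℕ => exp (-a * (j : ℝ) ^ ε) := by
  have hj : Tendsto (fun j : ℕ => (j : ℝ) ^ ε) atTop atTop :=
    (tendsto_rpow_atTop hε).comp tendsto_natCast_atTop_atTop
  refine summable_of_isBigO_nat (summable_nat_rpow.2 (by norm_num : (-2 : ℝ) < -1)) ?_
  refine ((isLittleO_exp_neg_mul_rpow_atTop ha (-2 / ε)).comp_tendsto hj).isBigO.congr_right
    fun j => ?_
  rw [Function.comp_apply, ← rpow_mul (Nat.cast_nonneg j), mul_div_cancel₀ _ hε.ne']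

theorem ae_nonneg_expMeasure (r : ℝ) : ∀ᵐ x ∂expMeasure r, 0 ≤ x := by
  rw [expMeasure, gammaMeasure,
    ae_withDensity_iff (f := gammaPDF 1 r) (measurable_gammaPDFReal 1 r).ennreal_ofReal]
  exact ae_of_all _ fun x hx => not_lt.1 fun h => hx (gammaPDF_of_neg h)

section Arrival

variable {Ω : Type*} [MeasurableSpace Ω] {P : Measure Ω}

theorem measureReal_abs_ge_le_of_mgf_le [IsFiniteMeasure P] {X : Ω → ℝ} {b c x : ℝ}
    (hc : 0 < c) (hx : 0 ≤ x) (hxb : x ≤ 2 * c * b)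
    (hint : ∀ s, |s| ≤ b → Integrable (fun ω => exp (s * X ω)) P)
    (hmgf : ∀ s, |s| ≤ b → mgf X P s ≤ exp (c * s ^ 2)) :
    P.real {ω | x ≤ |X ω|} ≤ 2 * exp (-x ^ 2 / (4 * c)) := by
  -- `s` minimises `-s * x + c * s ^ 2`
  set s := x / (2 * c)
  have hs : |s| ≤ b := by
    rw [abs_of_nonneg (by positivity), div_le_iff₀ (by positivity)]
    linarith
  have hs' : |-s| ≤ b := by rwa [abs_neg]
  have hexp : exp (-s * x) * exp (c * s ^ 2) = exp (-x ^ 2 / (4 * c)) := by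
    rw [← exp_add]
    congr 1
    simp only [s]
    field_simp
    ring
  have hupper : P.real {ω | x ≤ X ω} ≤ exp (-x ^ 2 / (4 * c)) :=
    calc P.real {ω | x ≤ X ω} ≤ exp (-s * x) * mgf X P s :=
          measure_ge_le_exp_mul_mgf x (by positivity) (hint s hs)
      _ ≤ exp (-x ^ 2 / (4 * c)) := by rw [← hexp]; gcongr; exact hmgf s hs
  have hlower : P.real {ω | X ω ≤ -x} ≤ exp (-x ^ 2 / (4 * c)) :=
    calc P.real {ω | X ω ≤ -x} ≤ exp (- -s * -x) * mgf X P (-s) :=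
          measure_le_le_exp_mul_mgf (-x) (neg_nonpos.2 (by positivity)) (hint (-s) hs')
      _ ≤ exp (-x ^ 2 / (4 * c)) := by
          rw [← hexp, neg_mul_neg, ← neg_sq s]
          gcongr
          exact hmgf (-s) hs'
  have hsub : {ω | x ≤ |X ω|} ⊆ {ω | x ≤ X ω} ∪ {ω | X ω ≤ -x} := by
    intro ω (hω : x ≤ |X ω|)
    rcases le_abs'.1 hω with h | h
    · exact Or.inr (show X ω ≤ -x by linarith)
    · exact Or.inl h
  calc P.real {ω | x ≤ |X ω|} ≤ P.real {ω | x ≤ X ω} + P.real {ω | X ω ≤ -x} :=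
        (measureReal_mono hsub).trans (measureReal_union_le _ _)
    _ ≤ 2 * exp (-x ^ 2 / (4 * c)) := by linarith

variable {E : ℕ → Ω → ℝ}

theorem ae_nonneg_arrival (hEmeas : ∀ k, Measurable (E k))
    (hElaw : ∀ k, Measure.map (E k) P = expMeasure 1) : ∀ᵐ ω ∂P, ∀ j, 0 ≤ arrival E j ω := by
  have hE : ∀ᵐ ω ∂P, ∀ k, 0 ≤ E k ω := ae_all_iff.2 fun k =>
    ae_of_ae_map (hEmeas k).aemeasurable ((hElaw k).symm ▸ ae_nonneg_expMeasure 1)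
  filter_upwards [hE] with ω hω j using Finset.sum_nonneg fun k _ => hω k

theorem mgf_arrival (hEmeas : ∀ k, Measurable (E k)) (hindep : iIndepFun E P)
    (hElaw : ∀ k, Measure.map (E k) P = expMeasure 1) (j : ℕ) {s : ℝ} (hs : s < 1) :
    mgf (arrival E j) P s = (1 - s)⁻¹ ^ j := by
  have hsum : arrival E j = ∑ k ∈ Finset.range j, E k := by
    ext ω
    simp [arrival]
  have hE : ∀ k, mgf (E k) P s = (1 - s)⁻¹ := fun k => by
    rw [← mgf_id_map (hEmeas k).aemeasurable, hElaw k, mgf_id_expMeasure one_pos hs, one_div]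
  simp [hsum, hindep.mgf_sum hEmeas, hE]

variable [IsProbabilityMeasure P]

theorem measureReal_abs_arrival_sub_ge_le (hEmeas : ∀ k, Measurable (E k))
    (hindep : iIndepFun E P) (hElaw : ∀ k, Measure.map (E k) P = expMeasure 1)
    {j : ℕ} (hj : 0 < j) {x : ℝ} (hx0 : 0 ≤ x) (hx : x ≤ 2 * j) :
    P.real {ω | x ≤ |arrival E j ω - j|} ≤ 2 * exp (-x ^ 2 / (8 * j)) := by
  have hmgf : ∀ s, |s| ≤ 1 / 2 →
      mgf (fun ω => arrival E j ω - j) P s = (1 - s)⁻¹ ^ j * exp (-(s * j)) := fun s hs => by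
    simp_rw [sub_eq_add_neg, mgf_add_const, mul_neg, ← sub_eq_add_neg]
    rw [mgf_arrival hEmeas hindep hElaw j (by linarith [le_abs_self s])]
  have h8 : (8 : ℝ) * j = 4 * (2 * j) := by ring
  rw [h8]
  refine measureReal_abs_ge_le_of_mgf_le (b := 1 / 2) (by positivity) hx0 (by linarith)
    (fun s hs => ?_) (fun s hs => ?_)
  · rw [← mgf_pos_iff, hmgf s hs]
    have : 0 < 1 - s := by linarith [le_abs_self s]
    positivity
  · calc mgf (fun ω => arrival E j ω - j) P s = (1 - s)⁻¹ ^ j * exp (-(s * j)) := hmgf s hs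
      _ ≤ exp (s + 2 * s ^ 2) ^ j * exp (-(s * j)) := by
          have : 0 < 1 - s := by linarith [le_abs_self s]
          gcongr
          exact inv_one_sub_le_exp_add_two_mul_sq hs
      _ = exp (2 * j * s ^ 2) := by
          rw [← exp_nat_mul, ← exp_add]
          ring_nf

theorem measure_abs_arrival_sub_ge_rpow_le (hEmeas : ∀ k, Measurable (E k))
    (hindep : iIndepFun E P) (hElaw : ∀ k, Measure.map (E k) P = expMeasure 1)
    {β : ℝ} (hβ0 : 1 / 2 < β) (hβ1 : β ≤ 1) (j : ℕ) :
    P {ω | (j : ℝ) ^ β ≤ |arrival E j ω - j|}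
      ≤ ENNReal.ofReal (2 * exp (-(1 / 8) * (j : ℝ) ^ (2 * β - 1))) := by
  rcases Nat.eq_zero_or_pos j with rfl | hj
  · refine prob_le_one.trans (ENNReal.one_le_ofReal.2 ?_)
    rw [Nat.cast_zero, zero_rpow (by linarith : 2 * β - 1 ≠ 0)]
    norm_num
  have hj' : (0 : ℝ) < j := Nat.cast_pos.2 hj
  have hle : (j : ℝ) ^ β ≤ 2 * j :=
    calc (j : ℝ) ^ β ≤ (j : ℝ) ^ (1 : ℝ) :=
          rpow_le_rpow_of_exponent_le (Nat.one_le_cast.2 hj) hβ1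
      _ ≤ 2 * j := by rw [rpow_one]; linarith
  have hpow : ((j : ℝ) ^ β) ^ 2 / (8 * j) = 1 / 8 * (j : ℝ) ^ (2 * β - 1) := by
    rw [← rpow_natCast, ← rpow_mul hj'.le, rpow_sub_one hj'.ne']
    push_cast
    ring_nf
  have h := measureReal_abs_arrival_sub_ge_le hEmeas hindep hElaw hj (by positivity) hle
  rw [neg_div, hpow, ← neg_mul] at h
  rw [← ofReal_measureReal]
  exact ENNReal.ofReal_le_ofReal h

theorem ae_eventually_abs_arrival_sub_lt (hEmeas : ∀ k, Measurable (E k))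
    (hindep : iIndepFun E P) (hElaw : ∀ k, Measure.map (E k) P = expMeasure 1)
    {β : ℝ} (hβ0 : 1 / 2 < β) (hβ1 : β ≤ 1) :
    ∀ᵐ ω ∂P, ∀ᶠ j : ℕ in atTop, |arrival E j ω - j| < (j : ℝ) ^ β := by
  have hsum : Summable fun j : ℕ => 2 * exp (-(1 / 8) * (j : ℝ) ^ (2 * β - 1)) :=
    (summable_exp_neg_mul_rpow (by norm_num) (by linarith)).mul_left 2
  have htsum := (ENNReal.tsum_le_tsum (measure_abs_arrival_sub_ge_rpow_le hEmeas hindep hElaw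
    hβ0 hβ1)).trans_lt hsum.tsum_ofReal_lt_top
  filter_upwards [ae_eventually_notMem htsum.ne] with ω hω
  exact hω.mono fun j hj => not_le.1 hj

end Arrival

theorem tendsto_natCast_rpow_of_neg {a : ℝ} (ha : a < 0) :
    Tendsto (fun n : ℕ => (n : ℝ) ^ a) atTop (𝓝 0) := by
  have h := (tendsto_rpow_neg_atTop (neg_pos.2 ha)).comp tendsto_natCast_atTop_atTop
  rwa [neg_neg] at h

section Deterministic

variable {g : ℕ → ℝ} {C α β γ : ℝ}

theorem abs_floor_div_sub_le (hβ : 0 ≤ β) (hg : ∀ j : ℕ, |g j - j| ≤ C + (j : ℝ) ^ β)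
    {n : ℕ} (hn : 0 < n) {t : ℝ} (ht : 0 ≤ t) :
    |g ⌊(n : ℝ) * t⌋₊ / n - t| ≤ (C + 1 + ((n : ℝ) * t) ^ β) / n := by
  have hn' : (0 : ℝ) < n := Nat.cast_pos.2 hn
  have hnt : 0 ≤ (n : ℝ) * t := by positivity
  set j := ⌊(n : ℝ) * t⌋₊
  have hfloor : |(j : ℝ) - n * t| ≤ 1 := by
    rw [abs_le]
    constructor <;> linarith [Nat.floor_le hnt, Nat.lt_floor_add_one ((n : ℝ) * t)]
  have hpow : (j : ℝ) ^ β ≤ ((n : ℝ) * t) ^ β :=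
    rpow_le_rpow (Nat.cast_nonneg j) (Nat.floor_le hnt) hβ
  rw [show g j / n - t = (g j - n * t) / n by field_simp, abs_div, abs_of_pos hn']
  gcongr
  linarith [abs_sub_le (g j) j ((n : ℝ) * t), hg j]

theorem add_add_rpow_div_le_mul_rpow_sub_one (hC : 0 ≤ C) {n : ℕ} (hn : 0 < n) {c : ℝ}
    (hc : 0 ≤ c) : (C + 1 + (n : ℝ) ^ c) / n ≤ (C + 2) * (n : ℝ) ^ (c - 1) := by
  have hN : (0 : ℝ) < n := Nat.cast_pos.2 hn
  rw [rpow_sub_one hN.ne', mul_div_assoc']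
  gcongr
  nlinarith [one_le_rpow (Nat.one_le_cast.2 hn : (1 : ℝ) ≤ n) hc]

theorem abs_rpow_floor_div_sub_rpow_le_of_le (hg0 : ∀ j, 0 ≤ g j) (hC : 0 ≤ C)
    (hg : ∀ j : ℕ, |g j - j| ≤ C + (j : ℝ) ^ β) (hα0 : 0 ≤ α) (hα1 : α ≤ 1) (hβ : 0 ≤ β)
    (hγ1 : γ ≤ 1) {n : ℕ} (hn : 0 < n) {t : ℝ} (ht0 : 0 ≤ t) (ht : t ≤ (n : ℝ) ^ (-γ)) :
    |(g ⌊(n : ℝ) * t⌋₊ / n) ^ α - t ^ α| ≤ (C + 2) ^ α * (n : ℝ) ^ (α * (β * (1 - γ) - 1)) := by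
  have hN : (0 : ℝ) < n := Nat.cast_pos.2 hn
  have hnt : (n : ℝ) * t ≤ (n : ℝ) ^ (1 - γ) := by
    rw [sub_eq_add_neg, rpow_add hN, rpow_one]
    gcongr
  calc |(g ⌊(n : ℝ) * t⌋₊ / n) ^ α - t ^ α| ≤ |g ⌊(n : ℝ) * t⌋₊ / n - t| ^ α :=
        abs_rpow_sub_rpow_le_abs_sub_rpow (div_nonneg (hg0 _) hN.le) ht0 hα0 hα1
    _ ≤ ((C + 1 + (n : ℝ) ^ (β * (1 - γ))) / n) ^ α := by
        refine rpow_le_rpow (abs_nonneg _) ((abs_floor_div_sub_le hβ hg hn ht0).trans ?_) hα0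
        rw [mul_comm β, rpow_mul hN.le]
        gcongr
    _ ≤ ((C + 2) * (n : ℝ) ^ (β * (1 - γ) - 1)) ^ α := by
        gcongr
        exact add_add_rpow_div_le_mul_rpow_sub_one hC hn (mul_nonneg hβ (by linarith))
    _ = (C + 2) ^ α * (n : ℝ) ^ (α * (β * (1 - γ) - 1)) := by
        rw [mul_rpow (by linarith) (by positivity), ← rpow_mul hN.le, mul_comm α]

theorem abs_rpow_floor_div_sub_rpow_le_of_ge (hg0 : ∀ j, 0 ≤ g j) (hC : 0 ≤ C)
    (hg : ∀ j : ℕ, |g j - j| ≤ C + (j : ℝ) ^ β) (hα0 : 0 ≤ α) (hα1 : α ≤ 1) (hβ : 0 ≤ β)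
    {n : ℕ} (hn : 0 < n) {t : ℝ} (ht : (n : ℝ) ^ (-γ) ≤ t) (ht1 : t ≤ 1) :
    |(g ⌊(n : ℝ) * t⌋₊ / n) ^ α - t ^ α| ≤ (C + 2) * (n : ℝ) ^ (γ * (1 - α) + β - 1) := by
  have hN : (0 : ℝ) < n := Nat.cast_pos.2 hn
  have ht0 : 0 < t := (rpow_pos_of_pos hN _).trans_le ht
  have htα : t ^ (α - 1) ≤ (n : ℝ) ^ (γ * (1 - α)) :=
    calc t ^ (α - 1) ≤ ((n : ℝ) ^ (-γ)) ^ (α - 1) :=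
          rpow_le_rpow_of_nonpos (rpow_pos_of_pos hN _) ht (by linarith)
      _ = (n : ℝ) ^ (γ * (1 - α)) := by rw [← rpow_mul hN.le]; ring_nf
  calc |(g ⌊(n : ℝ) * t⌋₊ / n) ^ α - t ^ α| ≤ t ^ (α - 1) * |g ⌊(n : ℝ) * t⌋₊ / n - t| :=
        abs_rpow_sub_rpow_le_rpow_sub_one_mul (div_nonneg (hg0 _) hN.le) ht0 hα0 hα1
    _ ≤ (n : ℝ) ^ (γ * (1 - α)) * ((C + 1 + (n : ℝ) ^ β) / n) := by
        refine mul_le_mul htα ((abs_floor_div_sub_le hβ hg hn ht0.le).trans ?_)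
          (abs_nonneg _) (by positivity)
        gcongr
        exact mul_le_of_le_one_right hN.le ht1
    _ ≤ (n : ℝ) ^ (γ * (1 - α)) * ((C + 2) * (n : ℝ) ^ (β - 1)) := by
        gcongr
        exact add_add_rpow_div_le_mul_rpow_sub_one hC hn hβ
    _ = (C + 2) * (n : ℝ) ^ (γ * (1 - α) + β - 1) := by
        rw [add_sub_assoc, rpow_add hN]
        ring

theorem tendsto_rpow_mul_iSup_abs_rpow_floor_div_sub_rpow (hg0 : ∀ j, 0 ≤ g j) (hC : 0 ≤ C)
    (hg : ∀ j : ℕ, |g j - j| ≤ C + (j : ℝ) ^ β) (hα0 : 0 < α) (hα1 : α ≤ 1) (hβ : 0 ≤ β)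
    (hγ1 : γ ≤ 1) (hsmall : β * (1 - γ) < 1 / 2)
    (hlarge : α / 2 + γ * (1 - α) + β < 1) :
    Tendsto (fun n : ℕ => (n : ℝ) ^ (α / 2) *
        ⨆ t : Set.Icc (0 : ℝ) 1, |(g ⌊(n : ℝ) * t⌋₊ / n) ^ α - (t : ℝ) ^ α|) atTop (𝓝 0) := by
  have hdecay : Tendsto (fun n : ℕ => (C + 2) ^ α * (n : ℝ) ^ (α / 2 + α * (β * (1 - γ) - 1))
      + (C + 2) * (n : ℝ) ^ (α / 2 + (γ * (1 - α) + β - 1))) atTop (𝓝 0) := by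
    simpa using ((tendsto_natCast_rpow_of_neg (by nlinarith)).const_mul ((C + 2) ^ α)).add
      ((tendsto_natCast_rpow_of_neg (by linarith)).const_mul (C + 2))
  refine squeeze_zero' (Eventually.of_forall fun n => ?_) ?_ hdecay
  · exact mul_nonneg (by positivity) (Real.iSup_nonneg fun t => abs_nonneg _)
  filter_upwards [eventually_gt_atTop 0] with n hn
  have hN : (0 : ℝ) < n := Nat.cast_pos.2 hn
  rw [rpow_add hN, rpow_add hN, mul_left_comm, mul_left_comm (C + 2), ← mul_add]
  gcongr
  refine ciSup_le fun t => ?_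
  rcases le_total (t : ℝ) ((n : ℝ) ^ (-γ)) with ht | ht
  · exact (abs_rpow_floor_div_sub_rpow_le_of_le hg0 hC hg hα0.le hα1 hβ hγ1 hn t.2.1 ht).trans
      (le_add_of_nonneg_right (by positivity))
  · exact (abs_rpow_floor_div_sub_rpow_le_of_ge hg0 hC hg hα0.le hα1 hβ hn ht t.2.2).trans
      (le_add_of_nonneg_left (by positivity))

end Deterministic

theorem exists_nonneg_forall_le_add_of_eventually_le {f h : ℕ → ℝ} (hh : ∀ j, 0 ≤ h j)
    (hf : ∀ᶠ j in atTop, f j ≤ h j) : ∃ C, 0 ≤ C ∧ ∀ j, f j ≤ C + h j := by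
  obtain ⟨N, hN⟩ := eventually_atTop.1 hf
  have hC : 0 ≤ ∑ i ∈ Finset.range N, |f i| := Finset.sum_nonneg fun i _ => abs_nonneg _
  refine ⟨_, hC, fun j => ?_⟩
  rcases lt_or_ge j N with hj | hj
  · have := Finset.single_le_sum (f := fun i => |f i|) (fun i _ => abs_nonneg _)
      (Finset.mem_range.2 hj)
    linarith [le_abs_self (f j), hh j]
  · linarith [hN j hj]

/-- **Negligibility of the centering discrepancy in the de-Poissonization**
(the claim `lim_n ŵd_n = 0` a.s., equation (eq:center diff)): for every `α ∈ (0,1)`,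
almost surely `lim_{n→∞} n^{α/2} sup_{t ∈ [0,1]} |(Γ_{⌊nt⌋}/n)^α - t^α| = 0`, i.e.
`sup_{t ∈ [0,1]} |(n λ_n(t))^α - (n t)^α| = o(n^{α/2})` a.s., with `λ_n(t) = Γ_{⌊nt⌋}/n`. -/
theorem centering_discrepancy_negligible {Ω : Type*} [MeasurableSpace Ω]
    (P : Measure Ω) [IsProbabilityMeasure P]
    (E : ℕ → Ω → ℝ) (hEmeas : ∀ k, Measurable (E k))
    (hindep : iIndepFun E P)
    (hElaw : ∀ k, Measure.map (E k) P = expMeasure 1)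
    (α : ℝ) (hα0 : 0 < α) (hα1 : α < 1) :
    ∀ᵐ ω ∂P,
      Tendsto (fun n : ℕ => (n : ℝ) ^ (α / 2) *
          ⨆ t : Set.Icc (0 : ℝ) 1,
            |(arrival E ⌊(n : ℝ) * (t : ℝ)⌋₊ ω / (n : ℝ)) ^ α - (t : ℝ) ^ α|)
        atTop (nhds 0) := by
  filter_upwards [ae_nonneg_arrival hEmeas hElaw, ae_eventually_abs_arrival_sub_lt hEmeas hindep
    hElaw (β := 1 / 2 + (1 - α) / 8) (by linarith) (by linarith)]
    with ω hnonneg hclose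
  obtain ⟨C, hC, hg⟩ := exists_nonneg_forall_le_add_of_eventually_le
    (fun j => rpow_nonneg (Nat.cast_nonneg j) _) (hclose.mono fun _ => le_of_lt)
  exact tendsto_rpow_mul_iSup_abs_rpow_floor_div_sub_rpow (g := fun j => arrival E j ω) (γ := 1 / 4)
    hnonneg hC hg hα0 hα1.le
    (by linarith) (by norm_num) (by linarith) (by linarith)
end
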